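/- arXiv:2505.14288 — 3 statements merged into one kernel-verified Lean document; each statement's English description precedes it below -/
import Mathlib

section
/- Let f : T₁ ⊔ … ⊔ Tₙ → S be an independent map of forests into a single tree S. Then f is wide if and only if the operad generated by S has a (necessarily unique) operation with inputs f(r_{T₁}),…,f(r_{Tₙ}) and output the root r_S, i.e. there is a subtree of S with leaves {f(r_{T₁}),…,f(r_{Tₙ})} and root r_S. -/
/-- A finite rooted tree, encoded via its edges and the `parent` function. -/
structure FRTree where
  E : Type
  fintype : Fintype E
  root : E
  parent : E → E
  parent_root : parent root = root
  reaches : ∀ e, ∃ n, parent^[n] e = root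
  acyclic : ∀ e n, e ≠ root → 0 < n → parent^[n] e ≠ e

/-- The edge poset: `e ≤ f` iff the path from `e` to the root contains `f`. -/
def FRTree.le (T : FRTree) (e f : T.E) : Prop := ∃ n, T.parent^[n] e = f

/-- A minimal edge (no children). -/
def FRTree.MinimalEdge (T : FRTree) (m : T.E) : Prop :=
  ∀ g, T.parent g = m → g = m

/-- A subtree of `T` with root `r_T`, encoded as its set of edges. -/
def FRTree.IsSubtree (T : FRTree) (A : Set T.E) : Prop :=
  T.root ∈ A ∧ (∀ e ∈ A, T.parent e ∈ A) ∧
    ∀ f ∈ A, (∀ e, T.parent e = f → e ≠ f → e ∈ A) ∨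
             (∀ e, T.parent e = f → e ≠ f → e ∉ A)

/-- The leaves of a subtree. -/
def FRTree.leavesOf (T : FRTree) (A : Set T.E) : Set T.E :=
  {e | e ∈ A ∧ ∀ g, T.parent g = e → g ≠ e → g ∉ A}

/-- A forest `T₁ ⊔ … ⊔ Tₙ`, as a family of finite rooted trees; its edges form
the type `Σ i, (T i).E`. -/
abbrev forestE {n : ℕ} (T : Fin n → FRTree) := Σ i : Fin n, (T i).E

namespace FRTree

open scoped Classical

variable (S : FRTree)

theorem le_refl' (e : S.E) : S.le e e := ⟨0, rfl⟩

theorem le_trans' {a b c : S.E} (h1 : S.le a b) (h2 : S.le b c) : S.le a c := by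
  obtain ⟨n, rfl⟩ := h1; obtain ⟨m, rfl⟩ := h2
  exact ⟨m + n, Function.iterate_add_apply _ m n a⟩

theorem le_antisymm' {a b : S.E} (h1 : S.le a b) (h2 : S.le b a) : a = b := by
  obtain ⟨n, hn⟩ := h1; obtain ⟨m, hm⟩ := h2
  by_cases ha : a = S.root
  · subst ha
    rw [Function.iterate_fixed S.parent_root n] at hn
    exact hn
  · have hc : S.parent^[m + n] a = a := by
      rw [Function.iterate_add_apply, hn, hm]
    have hz : m + n = 0 := by
      by_contra h
      exact S.acyclic a (m + n) ha (Nat.pos_of_ne_zero h) hc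
    have : n = 0 := by omega
    subst this
    simpa using hn

theorem le_total_of_le {m e g : S.E} (h1 : S.le m e) (h2 : S.le m g) :
    S.le e g ∨ S.le g e := by
  obtain ⟨a, ha⟩ := h1; obtain ⟨b, hb⟩ := h2
  rcases le_total a b with h | h
  · exact Or.inl ⟨b - a, by
      rw [← ha, ← Function.iterate_add_apply, Nat.sub_add_cancel h, hb]⟩
  · exact Or.inr ⟨a - b, by
      rw [← hb, ← Function.iterate_add_apply, Nat.sub_add_cancel h, ha]⟩

/-- The depth of an edge: the distance to the root. -/
noncomputable def depth (e : S.E) : ℕ := Nat.find (S.reaches e)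

theorem depth_spec (e : S.E) : S.parent^[S.depth e] e = S.root :=
  Nat.find_spec (S.reaches e)

theorem depth_lt {c b : S.E} (hc : S.parent c = b) (hne : c ≠ b) :
    S.depth b < S.depth c := by
  have hcroot : c ≠ S.root := by
    intro h; subst h; exact hne (S.parent_root ▸ hc.symm ▸ rfl)
  have hd1 : S.depth c ≠ 0 := by
    intro h
    have := S.depth_spec c
    rw [h] at this
    exact hcroot this
  have hb : S.parent^[S.depth c - 1] b = S.root := by
    have := S.depth_spec c
    rw [show S.depth c = (S.depth c - 1) + 1 by omega,
      Function.iterate_succ_apply, hc] at this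
    exact this
  have h2 : S.depth b ≤ S.depth c - 1 := Nat.find_min' (S.reaches b) hb
  omega

theorem exists_minimal_le (e : S.E) : ∃ m, S.le m e ∧ S.MinimalEdge m := by
  classical
  haveI := S.fintype
  obtain ⟨b, hb, hmax⟩ := Finset.exists_max_image
    (Finset.univ.filter (fun x => S.le x e)) S.depth
    ⟨e, by simp [S.le_refl']⟩
  simp only [Finset.mem_filter, Finset.mem_univ, true_and] at hb
  refine ⟨b, hb, fun g hg => ?_⟩
  by_contra hne
  have hgle : S.le g e := S.le_trans' ⟨1, hg⟩ hb
  have := hmax g (by simp [hgle])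
  have := S.depth_lt hg hne
  omega

end FRTree

/-- let `f : T₁ ⊔ … ⊔ Tₙ → S` be an independent map of forests
into a single tree `S` (encoded as a map of edges which is monotone on each
constituent and sends the roots of distinct constituents to incomparable edges
of `S`).  Then `f` is wide (every maximal monotonic path in `E(S)` from a
minimal edge to the root contains some `f(r_{Tᵢ})`) if and only if the operad
`Ω(S)` has a (necessarily unique) operation with inputs `f(r_{T₁}), …,
f(r_{Tₙ})` and output `r_S`, i.e. there is a subtree of `S` with leaves
exactly `{f(r_{T₁}), …, f(r_{Tₙ})}` and root `r_S`. -/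
theorem wide_iff_subtree {n : ℕ} (T : Fin n → FRTree) (S : FRTree)
    (f : forestE T → S.E)
    (hmono : ∀ i a b, (T i).le a b → S.le (f ⟨i, a⟩) (f ⟨i, b⟩))
    (hindep : ∀ i j, i ≠ j → ¬ S.le (f ⟨i, (T i).root⟩) (f ⟨j, (T j).root⟩)) :
    (∀ m, S.MinimalEdge m → ∃ i k, S.parent^[k] m = f ⟨i, (T i).root⟩) ↔
      (∃ A : Set S.E, S.IsSubtree A ∧
        S.leavesOf A = {x | ∃ i, x = f ⟨i, (T i).root⟩}) := by
  classical
  set r : Fin n → S.E := fun i => f ⟨i, (T i).root⟩ with hr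
  constructor
  · intro hwide
    -- every edge is comparable with some `r j`
    have comp : ∀ e : S.E, ∃ j, S.le e (r j) ∨ S.le (r j) e := by
      intro e
      obtain ⟨m, hme, hmin⟩ := S.exists_minimal_le e
      obtain ⟨j, k, hk⟩ := hwide m hmin
      exact ⟨j, S.le_total_of_le hme ⟨k, hk⟩⟩
    refine ⟨{x | ∃ i, S.le (r i) x}, ⟨?_, ?_, ?_⟩, ?_⟩
    · -- root ∈ A
      obtain ⟨j, hj | hj⟩ := comp S.root
      · obtain ⟨k, hk⟩ := hj
        rw [Function.iterate_fixed S.parent_root k] at hk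
        exact ⟨j, hk ▸ S.le_refl' _⟩
      · exact ⟨j, hj⟩
    · -- closed under parent
      rintro e ⟨i, k, hk⟩
      exact ⟨i, k + 1, by rw [Function.iterate_succ_apply', hk]⟩
    · -- sibling condition
      rintro g ⟨i, hig⟩
      by_cases hg : ∃ j, g = r j
      · obtain ⟨j, rfl⟩ := hg
        refine Or.inr fun e hpe hne ⟨k, hke⟩ => ?_
        have herj : S.le e (r j) := ⟨1, hpe⟩
        have : S.le (r k) (r j) := S.le_trans' hke herj
        rcases eq_or_ne k j with rfl | hkj
        · exact hne (S.le_antisymm' herj hke)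
        · exact hindep k j hkj this
      · refine Or.inl fun e hpe hne => ?_
        obtain ⟨j, hj | hj⟩ := comp e
        · obtain ⟨b, hb⟩ := hj
          rcases Nat.eq_zero_or_pos b with rfl | hbpos
          · exact ⟨j, hb ▸ S.le_refl' _⟩
          · exfalso
            have hb' : S.parent^[b - 1] (S.parent e) = r j := by
              have h1 : S.parent^[(b - 1) + 1] e = r j := by
                rw [show (b - 1) + 1 = b by omega]; exact hb
              rw [Function.iterate_succ_apply] at h1; exact h1
            have hgj : S.le g (r j) := ⟨b - 1, by rw [← hpe]; exact hb'⟩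
            have hij : S.le (r i) (r j) := S.le_trans' hig hgj
            rcases eq_or_ne i j with rfl | hij'
            · exact hg ⟨i, S.le_antisymm' hgj hig⟩
            · exact hindep i j hij' hij
        · exact ⟨j, hj⟩
    · -- leaves of A are exactly the `r i`
      ext e
      constructor
      · rintro ⟨⟨i, hie⟩, hleaf⟩
        refine ⟨i, ?_⟩
        by_contra hne
        have hie' : ∃ k, S.parent^[k] (r i) = e := hie
        set k₀ := Nat.find hie' with hk₀
        have hspec : S.parent^[k₀] (r i) = e := Nat.find_spec hie'
        have hk₀pos : 0 < k₀ := by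
          rcases Nat.eq_zero_or_pos k₀ with h | h
          · exact absurd (h ▸ hspec).symm hne
          · exact h
        set c := S.parent^[k₀ - 1] (r i) with hc
        have hpc : S.parent c = e := by
          have h1 : S.parent^[(k₀ - 1) + 1] (r i) = e := by
            rw [show (k₀ - 1) + 1 = k₀ by omega]; exact hspec
          rw [Function.iterate_succ_apply'] at h1
          rw [hc]; exact h1
        have hcne : c ≠ e := by
          intro h
          exact Nat.find_min hie' (show k₀ - 1 < k₀ by omega) h
        exact hleaf c hpc hcne ⟨i, k₀ - 1, rfl⟩
      · rintro ⟨i, rfl⟩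
        refine ⟨⟨i, S.le_refl' _⟩, fun g hpg hne ⟨k, hk⟩ => ?_⟩
        have hgr : S.le g (r i) := ⟨1, hpg⟩
        have : S.le (r k) (r i) := S.le_trans' hk hgr
        rcases eq_or_ne k i with rfl | hki
        · exact hne (S.le_antisymm' hgr hk)
        · exact hindep k i hki this
  · rintro ⟨A, ⟨hroot, hpar, hsib⟩, hleaves⟩ m hmin
    have hex : ∃ k, S.parent^[k] m ∈ A := by
      obtain ⟨k, hk⟩ := S.reaches m
      exact ⟨k, hk ▸ hroot⟩
    set k₀ := Nat.find hex with hk₀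
    have hspec : S.parent^[k₀] m ∈ A := Nat.find_spec hex
    have hleaf : S.parent^[k₀] m ∈ S.leavesOf A := by
      refine ⟨hspec, fun g hpg hne hgA => ?_⟩
      rcases Nat.eq_zero_or_pos k₀ with h | h
      · rw [h] at hpg
        exact hne (h ▸ hmin g hpg)
      · rcases hsib _ hspec with hall | hnone
        · have hc : S.parent (S.parent^[k₀ - 1] m) = S.parent^[k₀] m := by
            have h1 : S.parent^[(k₀ - 1) + 1] m = S.parent^[k₀] m := by
              rw [show (k₀ - 1) + 1 = k₀ by omega]
            rw [Function.iterate_succ_apply'] at h1; exact h1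
          have hcA : S.parent^[k₀ - 1] m ∉ A :=
            Nat.find_min hex (show k₀ - 1 < k₀ by omega)
          have hcne : S.parent^[k₀ - 1] m ≠ S.parent^[k₀] m := by
            intro h; exact hcA (h ▸ hspec)
          exact hcA (hall _ hc hcne)
        · exact hnone g hpg hne hgA
    have := hleaves ▸ hleaf
    obtain ⟨i, hi⟩ := this
    exact ⟨i, k₀, hi⟩
end

section
/- The endofunctor M ↦ N(Δ/M) on simplicial sets preserves colimits; equivalently, it is isomorphic to the left Kan extension along the Yoneda embedding of its restriction to the representables Δⁿ. -/
open CategoryTheory Opposite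

noncomputable def elementsNerveFunctor : SSet.{0} ⥤ SSet.{0} where
  obj M := nerve (M.Elementsᵒᵖ)
  map {M M'} u := nerveFunctor.{0, 0}.map
    (show Cat.of (M.Elementsᵒᵖ) ⟶ Cat.of (M'.Elementsᵒᵖ) from
      (CategoryOfElements.map u).op.toCatHom)
  map_id M := by
    change nerveFunctor.{0, 0}.map (𝟙 (Cat.of (M.Elementsᵒᵖ))) =
      𝟙 (nerveFunctor.{0, 0}.obj (Cat.of (M.Elementsᵒᵖ)))
    rw [CategoryTheory.Functor.map_id]
  map_comp {M M' M''} u v := by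
    change nerveFunctor.{0, 0}.map
      ((show Cat.of (M.Elementsᵒᵖ) ⟶ Cat.of (M'.Elementsᵒᵖ) from
        (CategoryOfElements.map u).op.toCatHom) ≫
       (show Cat.of (M'.Elementsᵒᵖ) ⟶ Cat.of (M''.Elementsᵒᵖ) from
        (CategoryOfElements.map v).op.toCatHom)) = _
    rw [CategoryTheory.Functor.map_comp]
    rfl

/-!
A `k`-simplex of `N(Δ/M)` is a chain `[n₀] → ⋯ → [n_k]` of simplex maps over `M`. Every element
along the chain is the restriction of the one at the last vertex, so such a chain is the same as a
chain in `Δ` together with an element of `M_{n_k}`. Hence `N(Δ/M)_k ≅ ∐_c M_{n_k(c)}` naturally in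
`M`: a coproduct of evaluation functors, which preserves colimits. Colimits of simplicial sets are
computed levelwise, so `M ↦ N(Δ/M)` preserves them.
-/

universe u v w u'

namespace CategoryTheory

open Limits

lemma Functor.ext_of_comp_faithful {J D E : Type*} [Category J] [Category D] [Category E]
    (P : D ⥤ E) [P.Faithful] {G G' : J ⥤ D} (hobj : ∀ i, G.obj i = G'.obj i)
    (hcomp : G ⋙ P = G' ⋙ P) : G = G' :=
  Functor.ext hobj fun _ _ f => P.map_injective (by simpa [eqToHom_map] using congr_hom hcomp f)

section SigmaEvaluation

variable {C : Type u} [Category.{v} C] {ι : Type w}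

def sigmaEvaluation (f : ι → C) : (C ⥤ Type w) ⥤ Type w where
  obj M := Σ i, M.obj (f i)
  map u := TypeCat.ofHom fun p => ⟨p.1, u.app _ p.2⟩

noncomputable def colimitDiscreteCompIso (f : ι → C) (M : C ⥤ Type w) :
    colimit (Discrete.functor f ⋙ M) ≅ Σ i, M.obj (f i) :=
  HasColimit.isoOfNatIso (Discrete.compNatIsoDiscrete f M) ≪≫ Types.coproductIso (M.obj ∘ f)

lemma ι_colimitDiscreteCompIso_hom (f : ι → C) (M : C ⥤ Type w) (i : ι) :
    colimit.ι (Discrete.functor f ⋙ M) ⟨i⟩ ≫ (colimitDiscreteCompIso f M).hom =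
      TypeCat.ofHom fun x => ⟨i, x⟩ := by
  rw [colimitDiscreteCompIso, Iso.trans_hom, HasColimit.isoOfNatIso_ι_hom_assoc]
  exact (Category.id_comp _).trans (Types.coproductIso_ι_comp_hom _ i)

noncomputable def sigmaEvaluationIso (f : ι → C) :
    (Functor.whiskeringLeft _ _ (Type w)).obj (Discrete.functor f) ⋙ colim ≅ sigmaEvaluation f :=
  NatIso.ofComponents (colimitDiscreteCompIso f) fun u => colimit.hom_ext fun ⟨i⟩ => by
    erw [ι_colimMap_assoc, ι_colimitDiscreteCompIso_hom, ← Category.assoc,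
      ι_colimitDiscreteCompIso_hom]
    rfl

instance (f : ι → C) : PreservesColimitsOfSize.{w, w} (sigmaEvaluation f) :=
  preservesColimits_of_natIso (sigmaEvaluationIso f)

end SigmaEvaluation

namespace CategoryOfElements

variable {C : Type u} [Category.{v} C] {F : C ⥤ Type w} {J : Type u'} [Preorder J] [OrderTop J]

def liftOp (c : J ⥤ Cᵒᵖ) (x : F.obj (c.obj ⊤).unop) : J ⥤ F.Elementsᵒᵖ where
  obj i := op ⟨(c.obj i).unop, F.map (c.map (homOfLE le_top)).unop x⟩
  map f := (homMk _ _ (c.map f).unop (by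
    rw [← Functor.map_comp_apply, ← unop_comp, ← c.map_comp]
    rfl)).op

lemma liftOp_comp_π (c : J ⥤ Cᵒᵖ) (x : F.obj (c.obj ⊤).unop) :
    liftOp c x ⋙ (π F).op = c :=
  rfl

lemma liftOp_obj_top (c : J ⥤ Cᵒᵖ) (x : F.obj (c.obj ⊤).unop) :
    ((liftOp c x).obj ⊤).unop.2 = x := by
  simp [liftOp, homOfLE_refl]

lemma liftOp_eta (G : J ⥤ F.Elementsᵒᵖ) : liftOp (G ⋙ (π F).op) (G.obj ⊤).unop.2 = G :=
  (π F).op.ext_of_comp_faithful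
    (fun i => congrArg (fun y => op (⟨(G.obj i).unop.1, y⟩ : F.Elements))
      (G.map (homOfLE le_top)).unop.2) rfl

def functorToOpEquivSigma : (J ⥤ F.Elementsᵒᵖ) ≃ Σ c : J ⥤ Cᵒᵖ, F.obj (c.obj ⊤).unop where
  toFun G := ⟨G ⋙ (π F).op, (G.obj ⊤).unop.2⟩
  invFun p := liftOp p.1 p.2
  left_inv := liftOp_eta
  right_inv p := Sigma.ext (liftOp_comp_π p.1 p.2) (heq_of_eq (liftOp_obj_top p.1 p.2))

end CategoryOfElements

end CategoryTheory

open Limits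

noncomputable def elementsNerveEvaluationIso (X : SimplexCategoryᵒᵖ) :
    elementsNerveFunctor ⋙ (evaluation _ _).obj X ≅
      sigmaEvaluation fun c : ComposableArrows SimplexCategoryᵒᵖᵒᵖ X.unop.len => (c.obj ⊤).unop :=
  NatIso.ofComponents (fun _ => CategoryOfElements.functorToOpEquivSigma.toIso) fun _ => rfl

/-- the endofunctor `M ↦ N(Δ/M)` on simplicial sets preserves
(all small) colimits; equivalently, it is isomorphic to the left Kan extension
along the Yoneda embedding of its restriction to the representables.
(Here `Δ/M`, the category of elements of `M`, is `(M.Elements)ᵒᵖ`.) -/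
theorem elementsNerve_preservesColimits :
    Nonempty (Limits.PreservesColimits elementsNerveFunctor) :=
  ⟨preservesColimits_of_evaluation _ fun X =>
    preservesColimits_of_natIso (elementsNerveEvaluationIso X).symm⟩
end

section
/- For the representable simplicial set Δᵏ, there is a natural transformation h from the identity functor on Δ/Δᵏ to the composite l ∘ r, whose component at ([n], α) is the map [n] → [α(n)] given by α (corestricted), a last-vertex-preserving morphism of Δ/Δᵏ. -/
open CategoryTheory SimplexCategory

/-- The last vertex functor `r : Δ/Δᵏ → [k]`, sending `([n], α)` to `α(n)`. -/
def lastVertexFunctor (k : ℕ) : Over (SimplexCategory.mk k) ⥤ Fin (k + 1) where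
  obj X := X.hom.toOrderHom (Fin.last X.left.len)
  map {X Y} φ := homOfLE (by
    dsimp only
    have h : φ.left ≫ Y.hom = X.hom := Over.w φ
    rw [← h]
    calc (φ.left ≫ Y.hom).toOrderHom (Fin.last X.left.len)
        = Y.hom.toOrderHom (φ.left.toOrderHom (Fin.last X.left.len)) := rfl
      _ ≤ Y.hom.toOrderHom (Fin.last Y.left.len) :=
          Y.hom.toOrderHom.monotone (Fin.le_last _))

/-- The inclusion `ι_i : Δⁱ → Δᵏ` of the initial segment `{0, …, i}`. -/
def initialSegIncl (k : ℕ) (i : Fin (k + 1)) :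
    SimplexCategory.mk i.val ⟶ SimplexCategory.mk k :=
  SimplexCategory.Hom.mk
    { toFun := fun j => Fin.castLE (by simp [SimplexCategory.len_mk]; omega) j
      monotone' := fun a b hab => hab }

/-- The functor `l : [k] → Δ/Δᵏ`, `i ↦ ([i], ι_i)`. -/
def segFunctor (k : ℕ) : Fin (k + 1) ⥤ Over (SimplexCategory.mk k) where
  obj i := Over.mk (initialSegIncl k i)
  map {i j} f := Over.homMk (SimplexCategory.Hom.mk
    { toFun := fun a => Fin.castLE (by
        have := f.le
        simp [SimplexCategory.len_mk]
        omega) a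
      monotone' := fun a b hab => hab })
    (by
      apply SimplexCategory.Hom.ext
      rfl)


def corestrict (k : ℕ) (X : Over (SimplexCategory.mk k)) :
    X ⟶ (lastVertexFunctor k ⋙ segFunctor k).obj X :=
  Over.homMk
    (SimplexCategory.Hom.mk
      { toFun := fun j => ⟨(X.hom.toOrderHom j : Fin (k + 1)).val, by
          have := X.hom.toOrderHom.monotone (Fin.le_last j)
          simp only [SimplexCategory.len_mk, lastVertexFunctor, Nat.lt_succ_iff]
          exact this⟩
        monotone' := fun a b hab => X.hom.toOrderHom.monotone hab })
    (by
      apply SimplexCategory.Hom.ext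
      ext j
      rfl)

/-- there is a natural transformation `h` from the identity
functor on `Δ/Δᵏ` to the composite `l ∘ r`, whose component at `([n], α)` is
the last-vertex-preserving morphism `([n], α) → ([α(n)], ι_{α(n)})` given by
`α` corestricted to `[α(n)]` (so it agrees with `α` valuewise and sends the
last vertex `n` to the last vertex `α(n)`, and commutes with the structure
maps to `[k]` by construction). -/
theorem identity_to_lr_natural_transformation (k : ℕ) :
    ∃ h : 𝟭 (Over (SimplexCategory.mk k)) ⟶
        lastVertexFunctor k ⋙ segFunctor k,
      ∀ X : Over (SimplexCategory.mk k),
        (∀ j : Fin (X.left.len + 1),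
          (((h.app X).left.toOrderHom j : Fin _) : ℕ) =
            ((X.hom.toOrderHom j : Fin (k + 1)) : ℕ)) ∧
        (h.app X).left.toOrderHom (Fin.last X.left.len) = Fin.last _ := by
  refine ⟨⟨fun X => corestrict k X, fun {X Y} φ => ?_⟩, fun X => ⟨fun j => rfl, rfl⟩⟩
  apply CategoryTheory.Over.OverMorphism.ext
  apply SimplexCategory.Hom.ext
  ext j
  have h2 : (φ.left ≫ Y.hom).toOrderHom j = X.hom.toOrderHom j :=
    congrArg (fun f => f.toOrderHom j) (Over.w φ)
  show ((φ.left ≫ Y.hom).toOrderHom j : Fin (k + 1)).val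
      = ((X.hom.toOrderHom j : Fin (k + 1)) : ℕ)
  exact congrArg Fin.val h2
end
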